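/- Let S be a finite-dimensional complex Hilbert space, let ρ be a density operator on S, and let E be a trace-preserving completely positive map on operators on S. Then Λ_max(ρ ‖ E) := inf{ D_max(ρ ‖ τ) : τ a density operator on S with E(τ) = τ } equals 0 if and only if E(ρ) = ρ. -/

import Mathlib

open scoped ComplexOrder

noncomputable section

namespace QIT

variable {n : Type*} [Fintype n] [DecidableEq n]

/-- `x ↦ x·log₂ x` with the convention `0·log 0 = 0`. -/
def xlog (x : ℝ) : ℝ := if x = 0 then 0 else x * Real.logb 2 x

/-- Von Neumann entropy (base 2) of a matrix, via its eigenvalues. -/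
def vN (ρ : Matrix n n ℂ) : ℝ :=
  if h : ρ.IsHermitian then -∑ i, xlog (h.eigenvalues i) else 0

/-- Matrix logarithm (base 2) via functional calculus on the support. -/
def matLog (ρ : Matrix n n ℂ) : Matrix n n ℂ :=
  if h : ρ.IsHermitian then
    (h.eigenvectorUnitary : Matrix n n ℂ) *
      Matrix.diagonal (fun i =>
        ((if h.eigenvalues i = 0 then 0 else Real.logb 2 (h.eigenvalues i) : ℝ) : ℂ)) *
      (star (h.eigenvectorUnitary : Matrix n n ℂ))
  else 0

/-- Support inclusion: `supp ρ ⊆ supp σ` (for PSD matrices: `ker σ ⊆ ker ρ`). -/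
def suppLe (ρ σ : Matrix n n ℂ) : Prop := ∀ v, σ.mulVec v = 0 → ρ.mulVec v = 0

open Classical in
/-- Umegaki relative entropy (base 2), `+∞` if the support condition fails. -/
def relEnt (ρ σ : Matrix n n ℂ) : EReal :=
  if suppLe ρ σ then (((ρ * (QIT.matLog ρ - QIT.matLog σ)).trace.re : ℝ) : EReal) else ⊤

/-- Max-relative entropy `D_max(ρ‖σ) = inf{λ : ρ ≤ 2^λ σ}`, `+∞` if no such λ. -/
def dMax (ρ σ : Matrix n n ℂ) : EReal :=
  sInf {x : EReal | ∃ l : ℝ, x = (l : EReal) ∧ ((2 : ℝ) ^ l • σ - ρ).PosSemidef}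

/-- Partial trace over the first tensor factor. -/
def ptrFst {α β : Type*} [Fintype α] (M : Matrix (α × β) (α × β) ℂ) : Matrix β β ℂ :=
  Matrix.of fun x y => ∑ i, M (i, x) (i, y)

/-- Partial trace over the second tensor factor. -/
def ptrSnd {α β : Type*} [Fintype β] (M : Matrix (α × β) (α × β) ℂ) : Matrix α α ℂ :=
  Matrix.of fun x y => ∑ k, M (x, k) (y, k)

/-- Partial trace over the third factor of a tripartite system. -/
def ptrC3 {α β γ : Type*} [Fintype γ] (M : Matrix (α × β × γ) (α × β × γ) ℂ) :
    Matrix (α × β) (α × β) ℂ :=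
  Matrix.of fun x y => ∑ k, M (x.1, x.2, k) (y.1, y.2, k)

/-- Conditional mutual information `I(A:C|B) = H(AB) + H(BC) - H(B) - H(ABC)`. -/
def cmi {α β γ : Type*} [Fintype α] [Fintype β] [Fintype γ]
    [DecidableEq α] [DecidableEq β] [DecidableEq γ]
    (ρ : Matrix (α × β × γ) (α × β × γ) ℂ) : ℝ :=
  vN (ptrC3 ρ) + vN (ptrFst ρ) - vN (ptrSnd (ptrFst ρ)) - vN ρ

/-- Tensoring a map on the second factor with the identity on the first factor. -/
def tensorId {k b b' : Type*} (Φ : Matrix b b ℂ → Matrix b' b' ℂ)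
    (M : Matrix (k × b) (k × b) ℂ) : Matrix (k × b') (k × b') ℂ :=
  Matrix.of fun x y => Φ (Matrix.of fun u v => M (x.1, u) (y.1, v)) x.2 y.2

/-- A quantum channel: linear, trace preserving and completely positive. -/
def IsCPTP {b b' : Type*} [Fintype b] [Fintype b']
    (Φ : Matrix b b ℂ →ₗ[ℂ] Matrix b' b' ℂ) : Prop :=
  (∀ M, (Φ M).trace = M.trace) ∧
    ∀ (k : ℕ) (M : Matrix (Fin k × b) (Fin k × b) ℂ), M.PosSemidef →
      (tensorId (⇑Φ) M).PosSemidef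

/-- `Λ_max(ρ_AB‖E)`: max-relative entropy distance from `ρ_AB` to the states
invariant under `id_A ⊗ E`. -/
def lambdaMax {a b : Type*} [Fintype a] [Fintype b]
    (ρ : Matrix (a × b) (a × b) ℂ) (E : Matrix b b ℂ → Matrix b b ℂ) : EReal :=
  ⨅ τ ∈ {τ : Matrix (a × b) (a × b) ℂ |
      τ.PosSemidef ∧ τ.trace = 1 ∧ tensorId E τ = τ}, dMax ρ τ

end QIT

/-!
If `Λ_max(ρ‖E) = 0`, then for every `t > 1` there is a fixed state `τ` with `ρ ≤ t τ`.
The positive matrix `σ = t τ - ρ` has trace `t - 1` and `E ρ - ρ = σ - E σ`; since an entry of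
a positive matrix is bounded by its trace (its `2 × 2` principal minors are nonnegative), every
entry of `E ρ - ρ` has modulus at most `2 (t - 1)`, and letting `t → 1` gives `E ρ = ρ`.
Conversely `ρ` is then itself a fixed state, and `D_max` between two states is nonnegative.
-/

namespace Matrix.PosSemidef

variable {n 𝕜 : Type*} [RCLike 𝕜] {A : Matrix n n 𝕜}

lemma re_apply_le_re_trace [Fintype n] (hA : A.PosSemidef) (i : n) :
    RCLike.re (A i i) ≤ RCLike.re A.trace := by
  rw [Matrix.trace, map_sum]
  exact Finset.single_le_sum (f := fun k => RCLike.re (A k k))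
    (fun k _ => (RCLike.nonneg_iff.mp hA.diag_nonneg).1) (Finset.mem_univ i)

lemma norm_apply_sq_le_re_mul_re (hA : A.PosSemidef) (i j : n) :
    ‖A i j‖ ^ 2 ≤ RCLike.re (A i i) * RCLike.re (A j j) := by
  classical
  have hdet := (hA.submatrix ![i, j]).det_nonneg
  simp only [Matrix.det_fin_two, Matrix.submatrix_apply, Matrix.cons_val_zero,
    Matrix.cons_val_one, ← hA.1.apply j i, RCLike.star_def, RCLike.mul_conj] at hdet
  have hi := (RCLike.nonneg_iff.mp (hA.diag_nonneg (i := i))).2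
  have hj := (RCLike.nonneg_iff.mp (hA.diag_nonneg (i := j))).2
  simpa [hi, hj] using (RCLike.nonneg_iff.mp hdet).1

lemma norm_apply_le_re_trace [Fintype n] (hA : A.PosSemidef) (i j : n) :
    ‖A i j‖ ≤ RCLike.re A.trace := by
  have hi := re_apply_le_re_trace hA i
  have hj := re_apply_le_re_trace hA j
  have hi0 := (RCLike.nonneg_iff.mp (hA.diag_nonneg (i := i))).1
  have hj0 := (RCLike.nonneg_iff.mp (hA.diag_nonneg (i := j))).1
  refine (pow_le_pow_iff_left₀ (norm_nonneg _) (hi0.trans hi) two_ne_zero).mp ?_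
  calc ‖A i j‖ ^ 2 ≤ RCLike.re (A i i) * RCLike.re (A j j) :=
        norm_apply_sq_le_re_mul_re hA i j
    _ ≤ RCLike.re A.trace ^ 2 := by rw [sq]; exact mul_le_mul hi hj hj0 (hi0.trans hi)

end Matrix.PosSemidef

namespace QIT

lemma IsCPTP.posSemidef_map {b b' : Type*} [Fintype b] [Fintype b']
    {Φ : Matrix b b ℂ →ₗ[ℂ] Matrix b' b' ℂ} (hΦ : IsCPTP Φ) {A : Matrix b b ℂ}
    (hA : A.PosSemidef) : (Φ A).PosSemidef := by
  have h := hΦ.2 1 _ (hA.submatrix (Prod.snd : Fin 1 × b → b))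
  have hsub : tensorId Φ (A.submatrix Prod.snd Prod.snd)
      = (Φ A).submatrix (Prod.snd : Fin 1 × b' → b') Prod.snd := rfl
  rw [hsub] at h
  exact h.submatrix (fun u => ((0 : Fin 1), u))

lemma dMax_self_nonpos {n : Type*} (ρ : Matrix n n ℂ) : dMax ρ ρ ≤ 0 :=
  sInf_le ⟨0, by norm_num, by simpa using Matrix.PosSemidef.zero⟩

lemma dMax_nonneg {n : Type*} [Fintype n] {ρ τ : Matrix n n ℂ} (hρ : ρ.trace = 1)
    (hτ : τ.trace = 1) :
    0 ≤ dMax ρ τ := by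
  refine le_sInf ?_
  rintro _ ⟨l, rfl, hl⟩
  have htrace : (((2 : ℝ) ^ l • τ - ρ).trace) = ((2 : ℝ) ^ l - 1 : ℝ) := by
    simp [Matrix.trace_sub, Matrix.trace_smul, hτ, hρ]
  have h1 : 1 ≤ (2 : ℝ) ^ l := by
    have := hl.trace_nonneg
    rw [htrace] at this
    linarith [Complex.zero_le_real.mp this]
  exact EReal.coe_nonneg.mpr ((Real.rpow_le_rpow_left_iff one_lt_two).mp (by simpa using h1))

lemma posSemidef_rpow_smul_sub_of_dMax_lt {n : Type*} [Fintype n] {ρ τ : Matrix n n ℂ}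
    (hτ : τ.PosSemidef) {l : ℝ} (h : dMax ρ τ < l) : ((2 : ℝ) ^ l • τ - ρ).PosSemidef := by
  obtain ⟨_, ⟨l', rfl, hl'⟩, hlt⟩ := sInf_lt_iff.mp h
  have hle : (2 : ℝ) ^ l' ≤ 2 ^ l :=
    Real.rpow_le_rpow_of_exponent_le one_le_two (EReal.coe_lt_coe_iff.mp hlt).le
  have hsplit : (2 : ℝ) ^ l • τ - ρ = ((2 : ℝ) ^ l' • τ - ρ) + ((2 : ℝ) ^ l - 2 ^ l') • τ := by
    rw [sub_smul]; abel
  rw [hsplit]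
  exact hl'.add (hτ.smul (sub_nonneg.mpr hle))

lemma IsCPTP.norm_apply_map_sub_le {n : Type*} [Fintype n]
    {E : Matrix n n ℂ →ₗ[ℂ] Matrix n n ℂ} (hE : IsCPTP E) {ρ τ : Matrix n n ℂ}
    (hρ : ρ.trace = 1) (hτ : τ.trace = 1) (hτE : E τ = τ) {t : ℝ}
    (hle : (t • τ - ρ).PosSemidef) (i j : n) : ‖(E ρ - ρ) i j‖ ≤ 2 * (t - 1) := by
  set σ := t • τ - ρ with hσ
  have hEσ : E ρ - ρ = σ - E σ := by
    rw [hσ, map_sub, LinearMap.map_smul_of_tower, hτE]; abel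
  have htrace : RCLike.re σ.trace = t - 1 := by
    simp [hσ, Matrix.trace_sub, Matrix.trace_smul, hτ, hρ]
  have hEtrace : RCLike.re (E σ).trace = t - 1 := by rw [hE.1, htrace]
  calc ‖(E ρ - ρ) i j‖ = ‖σ i j - E σ i j‖ := by rw [hEσ, Matrix.sub_apply]
    _ ≤ ‖σ i j‖ + ‖E σ i j‖ := norm_sub_le _ _
    _ ≤ 2 * (t - 1) := by
      linarith [hle.norm_apply_le_re_trace i j,
        (hE.posSemidef_map hle).norm_apply_le_re_trace i j]

end QIT

open QIT in
theorem lambdaMax_eq_zero_iff_fixed_general {S : Type*} [Fintype S]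
    (ρ : Matrix S S ℂ) (hρ : ρ.PosSemidef) (hρ1 : ρ.trace = 1)
    (E : Matrix S S ℂ →ₗ[ℂ] Matrix S S ℂ) (hE : IsCPTP E) :
    (⨅ τ ∈ {τ : Matrix S S ℂ | τ.PosSemidef ∧ τ.trace = 1 ∧ E τ = τ}, dMax ρ τ) = 0
      ↔ E ρ = ρ := by
  set F := {τ : Matrix S S ℂ | τ.PosSemidef ∧ τ.trace = 1 ∧ E τ = τ}
  constructor
  · intro hzero
    ext i j
    rw [← sub_eq_zero, ← Matrix.sub_apply, ← norm_le_zero_iff]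
    refine le_of_forall_pos_le_add fun δ hδ => ?_
    have ht : 1 < 1 + δ / 2 := by linarith
    have hlt : ⨅ τ ∈ F, dMax ρ τ < (Real.logb 2 (1 + δ / 2) : ℝ) :=
      hzero ▸ EReal.coe_pos.mpr (Real.logb_pos one_lt_two ht)
    obtain ⟨τ, hτlt⟩ := iInf_lt_iff.mp hlt
    obtain ⟨⟨hτ, hτ1, hτE⟩, hτlt⟩ := iInf_lt_iff.mp hτlt
    have hle := posSemidef_rpow_smul_sub_of_dMax_lt hτ hτlt
    rw [Real.rpow_logb two_pos (by norm_num) (by linarith)] at hle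
    linarith [hE.norm_apply_map_sub_le hρ1 hτ1 hτE hle i j]
  · intro hfix
    have hρF : ρ ∈ F := ⟨hρ, hρ1, hfix⟩
    exact le_antisymm ((biInf_le _ hρF).trans (dMax_self_nonpos ρ))
      (le_iInf₂ fun τ hτ => dMax_nonneg hρ1 hτ.2.1)

open QIT in
/-- `Λ_max(ρ‖E) = 0` if and only if `E(ρ) = ρ`, for a quantum
channel `E` on a finite-dimensional system. -/
theorem lambdaMax_eq_zero_iff_fixed {S : Type*} [Fintype S] [DecidableEq S]
    (ρ : Matrix S S ℂ) (hρ : ρ.PosSemidef) (hρ1 : ρ.trace = 1)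
    (E : Matrix S S ℂ →ₗ[ℂ] Matrix S S ℂ) (hE : IsCPTP E) :
    (⨅ τ ∈ {τ : Matrix S S ℂ | τ.PosSemidef ∧ τ.trace = 1 ∧ E τ = τ}, dMax ρ τ) = 0
      ↔ E ρ = ρ :=
  lambdaMax_eq_zero_iff_fixed_general ρ hρ hρ1 E hE
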